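/- Let n, k ∈ ℕ with k ≥ 3. Then there exists an (n−k)-regular bipartite false twin-free graph G on 2n vertices with γ_t(G) = 6 and γ_gr^t(G) = 6 if and only if n = k² − k + 1 and there exists a projective plane of order k − 1. -/

import Mathlib

/-!
Read the vertices of `A` as points, those of `B` as lines, and non-adjacency as incidence.

Suppose `γ_t = γ_gr^t = 6`. On either side, a legal sequence that dominates the other side can be
grown greedily from three vertices; two such sequences, one per side, concatenate to a total
dominating sequence, so both have length exactly `3`. Two points together with such a sequence of
lines form a total dominating set of size `5`, so any two points lie on a common line, and dually.
Two points on two common lines would start a legal sequence of four points, which extends to a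
total dominating sequence of length `7`; so two points lie on at most one common line. Counting
with regularity gives `k` lines through every point: a projective plane of order `k - 1` on
`n = k² - k + 1` points.

Conversely, in the non-incidence graph of a projective plane any two points lie on a line that
they do not dominate, so a total dominating set contains at least three points and, dually, three
lines. A legal sequence contains at most three points, as the footprints of a third and a fourth
point would be two lines through the first two, and dually at most three lines. A triangle
realises both bounds.
-/

/-- `S` is a total dominating set of `G`: every vertex has a neighbor in `S`. -/
def IsTotalDomSet {V : Type*} (G : SimpleGraph V) (S : Set V) : Prop :=
  ∀ v : V, ∃ u ∈ S, G.Adj v u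

/-- `l` is a legal sequence of `G`: the vertices are distinct and every vertex
(except possibly the first) totally dominates a vertex not totally dominated
by the previous vertices. -/
def IsLegalSeq {V : Type*} (G : SimpleGraph V) (l : List V) : Prop :=
  l.Nodup ∧ ∀ i : Fin l.length, 0 < (i : ℕ) →
    ∃ w : V, G.Adj (l.get i) w ∧ ∀ j : Fin l.length, (j : ℕ) < (i : ℕ) → ¬ G.Adj (l.get j) w

/-- `l` is a total dominating sequence of `G`. -/
def IsTotalDomSeq {V : Type*} (G : SimpleGraph V) (l : List V) : Prop :=
  IsLegalSeq G l ∧ IsTotalDomSet G {v | v ∈ l}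

/-- The Grundy total domination number of `G`: the maximum length of a total
dominating sequence. -/
noncomputable def grundyTotalDomNum {V : Type*} (G : SimpleGraph V) : ℕ :=
  sSup {k : ℕ | ∃ l : List V, IsTotalDomSeq G l ∧ l.length = k}

/-- The total domination number of `G`: the minimum cardinality of a total
dominating set. -/
noncomputable def totalDomNum {V : Type*} (G : SimpleGraph V) : ℕ :=
  sInf {k : ℕ | ∃ S : Set V, IsTotalDomSet G S ∧ S.ncard = k}

/-- `A`, `B` is a bipartition of `G`. -/
def IsBipartitionOf {V : Type*} (G : SimpleGraph V) (A B : Set V) : Prop :=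
  (∀ v : V, (v ∈ A ∧ v ∉ B) ∨ (v ∈ B ∧ v ∉ A)) ∧
  ∀ ⦃u v : V⦄, G.Adj u v → (u ∈ A ∧ v ∈ B) ∨ (u ∈ B ∧ v ∈ A)

/-- `G` has no false twins: distinct vertices have distinct open neighborhoods. -/
def FalseTwinFree {V : Type*} (G : SimpleGraph V) : Prop :=
  ∀ u v : V, u ≠ v → G.neighborSet u ≠ G.neighborSet v

/-- `G` has no isolated vertices. -/
def NoIsolatedVerts {V : Type*} (G : SimpleGraph V) : Prop :=
  ∀ v : V, ∃ u : V, G.Adj v u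

section LegalSeq

variable {V : Type*} {G : SimpleGraph V}

theorem isLegalSeq_nil : IsLegalSeq G [] :=
  ⟨List.nodup_nil, fun i => i.elim0⟩

theorem IsLegalSeq.sublist {l l' : List V} (h : IsLegalSeq G l) (hl : l'.Sublist l) :
    IsLegalSeq G l' := by
  obtain ⟨f, hf⟩ := List.sublist_iff_exists_fin_orderEmbedding_get_eq.mp hl
  refine ⟨h.1.sublist hl, fun i hi => ?_⟩
  have hfi : 0 < (f i : ℕ) := (Nat.zero_le _).trans_lt (f.strictMono (a := ⟨0, by omega⟩) hi)
  obtain ⟨w, hw, hnot⟩ := h.2 (f i) hfi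
  exact ⟨w, hf i ▸ hw, fun j hj => hf j ▸ hnot (f j) (f.strictMono hj)⟩

theorem isLegalSeq_concat_iff {l : List V} {v : V} :
    IsLegalSeq G (l ++ [v]) ↔
      IsLegalSeq G l ∧ (l ≠ [] → ∃ w, G.Adj v w ∧ ∀ u ∈ l, ¬G.Adj u w) := by
  constructor
  · intro h
    refine ⟨h.sublist (List.sublist_append_left l [v]), fun hne => ?_⟩
    obtain ⟨w, hw, hnot⟩ := h.2 ⟨l.length, by simp⟩ (List.length_pos_of_ne_nil hne)
    refine ⟨w, by simpa using hw, fun u hu => ?_⟩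
    obtain ⟨j, rfl⟩ := List.get_of_mem hu
    simpa [List.getElem_append_left j.2] using hnot ⟨j, by simp⟩ j.2
  · rintro ⟨⟨hnd, hl⟩, hv⟩
    have hvl : v ∉ l := fun hvl => by
      obtain ⟨w, hw, hnot⟩ := hv (List.ne_nil_of_mem hvl)
      exact hnot v hvl hw
    refine ⟨hnd.append (List.nodup_singleton v) (by simpa using hvl), fun i hi => ?_⟩
    obtain ⟨i, hil⟩ := i
    rcases (show i < l.length ∨ i = l.length by simp at hil; omega) with hil' | rfl
    · obtain ⟨w, hw, hnot⟩ := hl ⟨i, hil'⟩ hi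
      refine ⟨w, by simpa [List.getElem_append_left hil'] using hw, fun j hj => ?_⟩
      have hjl : (j : ℕ) < l.length := hj.trans hil'
      simpa [List.getElem_append_left hjl] using hnot ⟨j, hjl⟩ hj
    · obtain ⟨w, hw, hnot⟩ := hv (List.ne_nil_of_length_pos hi)
      refine ⟨w, by simpa using hw, fun j hj => ?_⟩
      simpa [List.getElem_append_left hj] using hnot _ (List.getElem_mem hj)

theorem isLegalSeq_singleton (v : V) : IsLegalSeq G [v] :=
  isLegalSeq_concat_iff.mpr ⟨isLegalSeq_nil, fun h => absurd rfl h⟩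

theorem IsLegalSeq.concat {l : List V} {v : V} (hl : IsLegalSeq G l) {w : V} (hvw : G.Adj v w)
    (hw : ∀ u ∈ l, ¬G.Adj u w) : IsLegalSeq G (l ++ [v]) :=
  isLegalSeq_concat_iff.mpr ⟨hl, fun _ => ⟨w, hvw, hw⟩⟩

end LegalSeq

section Bipartition

variable {V : Type*} {G : SimpleGraph V} {A B : Set V}

theorem IsBipartitionOf.symm (h : IsBipartitionOf G A B) : IsBipartitionOf G B A :=
  ⟨fun v => (h.1 v).symm, fun _ _ huv => (h.2 huv).symm⟩

theorem IsBipartitionOf.mem_or_mem (h : IsBipartitionOf G A B) (v : V) : v ∈ A ∨ v ∈ B :=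
  (h.1 v).imp And.left And.left

theorem IsBipartitionOf.notMem (h : IsBipartitionOf G A B) {v : V} (hv : v ∈ A) : v ∉ B :=
  ((h.1 v).resolve_right fun h' => h'.2 hv).2

theorem IsBipartitionOf.mem_of_adj (h : IsBipartitionOf G A B) {u v : V} (hu : u ∈ A)
    (huv : G.Adj u v) : v ∈ B :=
  (h.2 huv).elim And.right fun h' => absurd h'.1 (h.notMem hu)

theorem IsBipartitionOf.not_adj (h : IsBipartitionOf G A B) {u v : V} (hu : u ∈ A)
    (hv : v ∈ A) : ¬G.Adj u v :=
  fun huv => h.notMem hv (h.mem_of_adj hu huv)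

theorem IsBipartitionOf.compl_eq (h : IsBipartitionOf G A B) : Aᶜ = B :=
  Set.ext fun v => ⟨fun hv => (h.mem_or_mem v).resolve_left hv, fun hv hvA => h.notMem hvA hv⟩

theorem IsBipartitionOf.ncard_eq_ncard [Finite V] (hbip : IsBipartitionOf G A B) {d : ℕ}
    (hreg : ∀ v, (G.neighborSet v).ncard = d) (hd : d ≠ 0) : A.ncard = B.ncard := by
  classical
  have := Fintype.ofFinite V
  have hdeg : ∀ v, G.degree v = d := fun v => by
    rw [← G.card_neighborSet_eq_degree, ← Set.toFinset_card, ← Set.ncard_eq_toFinset_card', hreg]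
  have hbw : G.IsBipartiteWith ↑A.toFinset ↑B.toFinset := by
    simpa using SimpleGraph.IsBipartiteWith.mk (Set.disjoint_left.mpr fun _ => hbip.notMem) hbip.2
  have h := SimpleGraph.isBipartiteWith_sum_degrees_eq hbw
  simp only [hdeg, Finset.sum_const, smul_eq_mul] at h
  rw [Set.ncard_eq_toFinset_card', Set.ncard_eq_toFinset_card']
  exact Nat.eq_of_mul_eq_mul_right (Nat.pos_of_ne_zero hd) h

theorem IsBipartitionOf.ncard_eq_of_regular [Finite V] (hbip : IsBipartitionOf G A B) {n d : ℕ}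
    (hcard : Nat.card V = 2 * n) (hreg : ∀ v, (G.neighborSet v).ncard = d) (hd : d ≠ 0) :
    A.ncard = n := by
  have := Set.ncard_add_ncard_compl A
  rw [hbip.compl_eq, ← hbip.ncard_eq_ncard hreg hd] at this
  omega

theorem IsBipartitionOf.ncard_nonAdj [Finite V] (hbip : IsBipartitionOf G A B) {a : V}
    (ha : a ∈ A) : {x ∈ B | ¬G.Adj a x}.ncard = B.ncard - (G.neighborSet a).ncard :=
  Set.ncard_sdiff fun _ => hbip.mem_of_adj ha

theorem IsLegalSeq.append (hbip : IsBipartitionOf G A B) (hni : NoIsolatedVerts G)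
    {lA lB : List V} (h₁ : IsLegalSeq G lA) (hA : ∀ x ∈ lA, x ∈ A) (h₂ : IsLegalSeq G lB)
    (hB : ∀ x ∈ lB, x ∈ B) : IsLegalSeq G (lA ++ lB) := by
  induction lB using List.reverseRecOn with
  | nil => simpa using h₁
  | append_singleton lB b ih =>
    rw [isLegalSeq_concat_iff] at h₂
    have hbB : b ∈ B := hB b (by simp)
    obtain ⟨w, hbw, hw⟩ : ∃ w, G.Adj b w ∧ ∀ u ∈ lB, ¬G.Adj u w := by
      rcases eq_or_ne lB [] with rfl | hne
      · obtain ⟨w, hw⟩ := hni b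
        exact ⟨w, hw, by simp⟩
      · exact h₂.2 hne
    have hwA : w ∈ A := hbip.symm.mem_of_adj hbB hbw
    rw [← List.append_assoc]
    refine (ih h₂.1 fun x hx => hB x (by simp [hx])).concat hbw fun u hu => ?_
    rcases List.mem_append.mp hu with hu | hu
    · exact hbip.not_adj (hA u hu) hwA
    · exact hw u hu

theorem isTotalDomSet_append (hbip : IsBipartitionOf G A B) {lA lB : List V}
    (hA : ∀ b ∈ B, ∃ a ∈ lA, G.Adj b a) (hB : ∀ a ∈ A, ∃ b ∈ lB, G.Adj a b) :
    IsTotalDomSet G {v | v ∈ lA ++ lB} := by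
  intro v
  rcases hbip.mem_or_mem v with hv | hv
  · obtain ⟨b, hb, hvb⟩ := hB v hv
    exact ⟨b, List.mem_append_right _ hb, hvb⟩
  · obtain ⟨a, ha, hva⟩ := hA v hv
    exact ⟨a, List.mem_append_left _ ha, hva⟩

structure IsLegalCover (G : SimpleGraph V) (A B : Set V) (l : List V) : Prop where
  isLegalSeq : IsLegalSeq G l
  subset : ∀ x ∈ l, x ∈ A
  dominates : ∀ b ∈ B, ∃ a ∈ l, G.Adj b a

theorem IsLegalCover.isTotalDomSeq_append (hbip : IsBipartitionOf G A B)
    (hni : NoIsolatedVerts G) {lA lB : List V} (hA : IsLegalCover G A B lA)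
    (hB : IsLegalCover G B A lB) : IsTotalDomSeq G (lA ++ lB) :=
  ⟨hA.isLegalSeq.append hbip hni hA.subset hB.isLegalSeq hB.subset,
    isTotalDomSet_append hbip hA.dominates hB.dominates⟩

theorem IsLegalSeq.exists_isLegalCover [Fintype V] (hbip : IsBipartitionOf G A B)
    (hni : NoIsolatedVerts G) {l : List V} (hl : IsLegalSeq G l) (hA : ∀ x ∈ l, x ∈ A) :
    ∃ l', IsLegalCover G A B l' ∧ l.length ≤ l'.length := by
  by_cases hdom : ∀ b ∈ B, ∃ a ∈ l, G.Adj b a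
  · exact ⟨l, ⟨hl, hA, hdom⟩, le_rfl⟩
  push Not at hdom
  obtain ⟨b, hb, hnb⟩ := hdom
  obtain ⟨w, hbw⟩ := hni b
  have hl' : IsLegalSeq G (l ++ [w]) := hl.concat hbw.symm fun u hu hub => hnb u hu hub.symm
  have hlen : (l ++ [w]).length ≤ Fintype.card V := hl'.1.length_le_card
  obtain ⟨l', hl'', hlen'⟩ := hl'.exists_isLegalCover hbip hni
    (by simpa [or_imp, forall_and] using ⟨hA, hbip.symm.mem_of_adj hb hbw⟩)
  exact ⟨l', hl'', by simp at hlen'; omega⟩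
termination_by Fintype.card V - l.length
decreasing_by simp at hlen ⊢; omega

end Bipartition

section DominationNumbers

variable {V : Type*} {G : SimpleGraph V}

theorem totalDomNum_le_ncard {S : Set V} (hS : IsTotalDomSet G S) : totalDomNum G ≤ S.ncard :=
  Nat.sInf_le ⟨S, hS, rfl⟩

theorem le_totalDomNum {m : ℕ} {S : Set V} (hS : IsTotalDomSet G S)
    (h : ∀ T, IsTotalDomSet G T → m ≤ T.ncard) : m ≤ totalDomNum G :=
  le_csInf ⟨_, S, hS, rfl⟩ (by rintro _ ⟨T, hT, rfl⟩; exact h T hT)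

theorem nonempty_of_totalDomNum_ne_zero (h : totalDomNum G ≠ 0) : Nonempty V := by
  by_contra hV
  rw [not_nonempty_iff] at hV
  exact h (Nat.eq_zero_of_le_zero ((totalDomNum_le_ncard (S := ∅) isEmptyElim).trans_eq
    (Set.ncard_empty V)))

theorem noIsolatedVerts_of_totalDomNum_ne_zero (h : totalDomNum G ≠ 0) : NoIsolatedVerts G := by
  intro v
  by_contra! hv
  refine h (Nat.sInf_eq_zero.mpr (Or.inr (Set.eq_empty_of_forall_notMem ?_)))
  rintro _ ⟨S, hS, -⟩
  obtain ⟨u, -, hu⟩ := hS v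
  exact hv u hu

theorem length_le_grundyTotalDomNum [Finite V] {l : List V} (hl : IsTotalDomSeq G l) :
    l.length ≤ grundyTotalDomNum G := by
  have := Fintype.ofFinite V
  exact le_csSup ⟨Fintype.card V, by rintro _ ⟨l', hl', rfl⟩; exact hl'.1.1.length_le_card⟩
    ⟨l, hl, rfl⟩

theorem grundyTotalDomNum_le {m : ℕ} (h : ∀ l, IsTotalDomSeq G l → l.length ≤ m) :
    grundyTotalDomNum G ≤ m :=
  csSup_le' (by rintro _ ⟨l, hl, rfl⟩; exact h l hl)

theorem ncard_setOf_mem_le_length (l : List V) : {v | v ∈ l}.ncard ≤ l.length := by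
  classical
  rw [← List.coe_toFinset, Set.ncard_coe_finset]
  exact l.toFinset_card_le

end DominationNumbers

theorem Set.exists_subset_pair_of_ncard_le_two {α : Type*} {s t : Set α} (hs : s.Finite)
    (hst : s ⊆ t) (ht : t.Nonempty) (h : s.ncard ≤ 2) : ∃ x ∈ t, ∃ y ∈ t, s ⊆ {x, y} := by
  interval_cases hcard : s.ncard
  · obtain ⟨x, hx⟩ := ht
    exact ⟨x, hx, x, hx, by simp [(Set.ncard_eq_zero hs).mp hcard]⟩
  · obtain ⟨x, rfl⟩ := Set.ncard_eq_one.mp hcard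
    exact ⟨x, hst rfl, x, hst rfl, by simp⟩
  · obtain ⟨x, y, -, rfl⟩ := Set.ncard_eq_two.mp hcard
    exact ⟨x, hst (by simp), y, hst (by simp), subset_rfl⟩

namespace SimpleGraph

def commonNonNeighbors {V : Type*} (G : SimpleGraph V) (S : Set V) (u v : V) : Set V :=
  {x ∈ S | ¬G.Adj u x ∧ ¬G.Adj v x}

end SimpleGraph

/-- The axioms of a projective plane except nondegeneracy, with points `A`, lines `B`, and
non-adjacency as incidence. -/
structure IsProjectiveNonAdj {V : Type*} (G : SimpleGraph V) (A B : Set V) : Prop where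
  join : ∀ a₁ ∈ A, ∀ a₂ ∈ A, (G.commonNonNeighbors B a₁ a₂).Nonempty
  meet : ∀ b₁ ∈ B, ∀ b₂ ∈ B, (G.commonNonNeighbors A b₁ b₂).Nonempty
  unique : ∀ a₁ ∈ A, ∀ a₂ ∈ A, a₁ ≠ a₂ → (G.commonNonNeighbors B a₁ a₂).Subsingleton

section CommonNonNeighbors

variable {V : Type*} {G : SimpleGraph V} {A B : Set V}

theorem subsingleton_commonNonNeighbors_symm
    (hunique : ∀ a₁ ∈ A, ∀ a₂ ∈ A, a₁ ≠ a₂ → (G.commonNonNeighbors B a₁ a₂).Subsingleton) :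
    ∀ b₁ ∈ B, ∀ b₂ ∈ B, b₁ ≠ b₂ → (G.commonNonNeighbors A b₁ b₂).Subsingleton := by
  rintro b₁ hb₁ b₂ hb₂ hb x ⟨hx, hx₁, hx₂⟩ y ⟨hy, hy₁, hy₂⟩
  by_contra hxy
  exact hb (hunique x hx y hy hxy ⟨hb₁, fun h => hx₁ h.symm, fun h => hy₁ h.symm⟩
    ⟨hb₂, fun h => hx₂ h.symm, fun h => hy₂ h.symm⟩)

theorem three_le_ncard_inter [Finite V] (hbip : IsBipartitionOf G A B)
    (hjoin : ∀ a₁ ∈ A, ∀ a₂ ∈ A, (G.commonNonNeighbors B a₁ a₂).Nonempty) (hA : A.Nonempty)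
    {S : Set V} (hS : IsTotalDomSet G S) : 3 ≤ (S ∩ A).ncard := by
  by_contra! h
  obtain ⟨a₁, ha₁, a₂, ha₂, hsub⟩ := Set.exists_subset_pair_of_ncard_le_two
    (s := S ∩ A) (Set.toFinite _) Set.inter_subset_right hA (by omega)
  -- a line through the at most two points of `S` is not dominated by `S`
  obtain ⟨b, hb, hb₁, hb₂⟩ := hjoin a₁ ha₁ a₂ ha₂
  obtain ⟨u, huS, hbu⟩ := hS b
  rcases hsub ⟨huS, hbip.symm.mem_of_adj hb hbu⟩ with rfl | rfl
  · exact hb₁ hbu.symm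
  · exact hb₂ hbu.symm

theorem six_le_ncard_of_isTotalDomSet [Finite V] (hbip : IsBipartitionOf G A B)
    (hjoin : ∀ a₁ ∈ A, ∀ a₂ ∈ A, (G.commonNonNeighbors B a₁ a₂).Nonempty)
    (hmeet : ∀ b₁ ∈ B, ∀ b₂ ∈ B, (G.commonNonNeighbors A b₁ b₂).Nonempty)
    (hA : A.Nonempty) (hB : B.Nonempty) {S : Set V} (hS : IsTotalDomSet G S) : 6 ≤ S.ncard := by
  have hSB : S ∩ B ⊆ S \ A := fun v hv => ⟨hv.1, hbip.symm.notMem hv.2⟩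
  have := three_le_ncard_inter hbip hjoin hA hS
  have := three_le_ncard_inter hbip.symm hmeet hB hS
  have := Set.ncard_le_ncard hSB
  have := Set.ncard_inter_add_ncard_sdiff_eq_ncard S A
  omega

theorem totalDomNum_eq_six [Finite V] (hbip : IsBipartitionOf G A B)
    (hjoin : ∀ a₁ ∈ A, ∀ a₂ ∈ A, (G.commonNonNeighbors B a₁ a₂).Nonempty)
    (hmeet : ∀ b₁ ∈ B, ∀ b₂ ∈ B, (G.commonNonNeighbors A b₁ b₂).Nonempty)
    (hA : A.Nonempty) (hB : B.Nonempty) {S : Set V} (hS : IsTotalDomSet G S) (hS6 : S.ncard ≤ 6) :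
    totalDomNum G = 6 :=
  le_antisymm ((totalDomNum_le_ncard hS).trans hS6)
    (le_totalDomNum hS fun _ => six_le_ncard_of_isTotalDomSet hbip hjoin hmeet hA hB)

theorem IsLegalSeq.length_le_three (hbip : IsBipartitionOf G A B)
    (hunique : ∀ a₁ ∈ A, ∀ a₂ ∈ A, a₁ ≠ a₂ → (G.commonNonNeighbors B a₁ a₂).Subsingleton)
    {l : List V} (hl : IsLegalSeq G l) (hA : ∀ x ∈ l, x ∈ A) : l.length ≤ 3 := by
  match l, hl, hA with
  | [], _, _ | [_], _, _ | [_, _], _, _ | [_, _, _], _, _ => simp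
  | p₁ :: p₂ :: p₃ :: p₄ :: l, hl, hA =>
    have h₄ : IsLegalSeq G ([p₁, p₂, p₃] ++ [p₄]) :=
      hl.sublist (List.sublist_append_left [p₁, p₂, p₃, p₄] l)
    obtain ⟨h₃, m₄, hm₄, hm₄'⟩ := isLegalSeq_concat_iff.mp h₄ |>.imp_right (· (by simp))
    obtain ⟨h₂, m₃, hm₃, hm₃'⟩ :=
      (isLegalSeq_concat_iff (l := [p₁, p₂])).mp h₃ |>.imp_right (· (by simp))
    have hp : p₁ ≠ p₂ := by simpa using h₂.1
    -- the footprints of `p₃` and `p₄` are distinct common non-neighbours of `p₁` and `p₂`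
    have hm : m₃ = m₄ := hunique p₁ (hA _ (by simp)) p₂ (hA _ (by simp)) hp
      ⟨hbip.mem_of_adj (hA _ (by simp)) hm₃, hm₃' p₁ (by simp), hm₃' p₂ (by simp)⟩
      ⟨hbip.mem_of_adj (hA _ (by simp)) hm₄, hm₄' p₁ (by simp), hm₄' p₂ (by simp)⟩
    exact absurd (hm ▸ hm₃) (hm₄' p₃ (by simp))

theorem IsLegalSeq.length_le_six (hbip : IsBipartitionOf G A B)
    (hunique : ∀ a₁ ∈ A, ∀ a₂ ∈ A, a₁ ≠ a₂ → (G.commonNonNeighbors B a₁ a₂).Subsingleton)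
    {l : List V} (hl : IsLegalSeq G l) : l.length ≤ 6 := by
  classical
  rw [List.length_eq_length_filter_add (· ∈ A)]
  have hA := (hl.sublist (List.filter_sublist (p := fun x => decide (x ∈ A)))).length_le_three
    hbip hunique (by simp +contextual)
  have hB := (hl.sublist (List.filter_sublist (p := fun x => !decide (x ∈ A)))).length_le_three
    hbip.symm (subsingleton_commonNonNeighbors_symm hunique)
    (fun x hx => (hbip.mem_or_mem x).resolve_left (by simpa using (List.mem_filter.mp hx).2))
  omega

theorem grundyTotalDomNum_eq_six [Finite V] (hbip : IsBipartitionOf G A B)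
    (hunique : ∀ a₁ ∈ A, ∀ a₂ ∈ A, a₁ ≠ a₂ → (G.commonNonNeighbors B a₁ a₂).Subsingleton)
    {l : List V} (hl : IsTotalDomSeq G l) (hl6 : 6 ≤ l.length) : grundyTotalDomNum G = 6 :=
  le_antisymm (grundyTotalDomNum_le fun _ hl' => hl'.1.length_le_six hbip hunique)
    (hl6.trans (length_le_grundyTotalDomNum hl))

theorem exists_isLegalCover_of_not_collinear
    (hjoin : ∀ a₁ ∈ A, ∀ a₂ ∈ A, (G.commonNonNeighbors B a₁ a₂).Nonempty)
    (hunique : ∀ a₁ ∈ A, ∀ a₂ ∈ A, a₁ ≠ a₂ → (G.commonNonNeighbors B a₁ a₂).Subsingleton)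
    {p₁ p₂ p₃ : V} (hp₁ : p₁ ∈ A) (hp₂ : p₂ ∈ A) (hp₃ : p₃ ∈ A)
    (hnc : ∀ b ∈ B, G.Adj p₁ b ∨ G.Adj p₂ b ∨ G.Adj p₃ b) :
    ∃ lA lB, IsLegalCover G A B lA ∧ IsLegalCover G B A lB ∧ lA.length = 3 ∧ lB.length = 3 := by
  -- `lᵢ` is a line through the two points other than `pᵢ`
  obtain ⟨l₁, hl₁, h₂₁, h₃₁⟩ := hjoin p₂ hp₂ p₃ hp₃
  obtain ⟨l₂, hl₂, h₁₂, h₃₂⟩ := hjoin p₁ hp₁ p₃ hp₃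
  obtain ⟨l₃, hl₃, h₁₃, h₂₃⟩ := hjoin p₁ hp₁ p₂ hp₂
  have h₁₁ : G.Adj p₁ l₁ := by simpa [h₂₁, h₃₁] using hnc l₁ hl₁
  have h₂₂ : G.Adj p₂ l₂ := by simpa [h₁₂, h₃₂] using hnc l₂ hl₂
  have h₃₃ : G.Adj p₃ l₃ := by simpa [h₁₃, h₂₃] using hnc l₃ hl₃
  refine ⟨[p₁, p₂, p₃], [l₁, l₂, l₃], ⟨?_, ?_, ?_⟩, ⟨?_, ?_, ?_⟩, rfl, rfl⟩
  · exact ((isLegalSeq_singleton p₁).concat h₂₂ (by simpa)).concat h₃₃ (by simp [h₁₃, h₂₃])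
  · simp [hp₁, hp₂, hp₃]
  · intro b hb
    rcases hnc b hb with h | h | h <;> simp [G.adj_comm b, h]
  · exact ((isLegalSeq_singleton l₁).concat h₂₂.symm (by simpa [G.adj_comm])).concat h₃₃.symm
      (by simp [G.adj_comm, h₃₁, h₃₂])
  · simp [hl₁, hl₂, hl₃]
  · intro a ha
    by_contra! h
    rcases eq_or_ne a p₃ with rfl | hne
    · exact h l₃ (by simp) h₃₃
    · have h₁₂' : l₁ = l₂ := hunique a ha p₃ hp₃ hne ⟨hl₁, h l₁ (by simp), h₃₁⟩
        ⟨hl₂, h l₂ (by simp), h₃₂⟩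
      exact h₁₂ (h₁₂' ▸ h₁₁)

theorem neighborSet_ne_of_one_lt_ncard [Finite V] (hbip : IsBipartitionOf G A B)
    (hni : NoIsolatedVerts G)
    (hunique : ∀ a₁ ∈ A, ∀ a₂ ∈ A, a₁ ≠ a₂ → (G.commonNonNeighbors B a₁ a₂).Subsingleton)
    {u v : V} (hu : u ∈ A) (hu2 : 1 < {x ∈ B | ¬G.Adj u x}.ncard) (huv : u ≠ v) :
    G.neighborSet u ≠ G.neighborSet v := by
  intro heq
  have hadj (x : V) : G.Adj u x ↔ G.Adj v x := Set.ext_iff.mp heq x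
  rcases hbip.mem_or_mem v with hv | hv
  · obtain ⟨x, ⟨hx, hux⟩, y, ⟨hy, huy⟩, hxy⟩ := (Set.one_lt_ncard (Set.toFinite _)).mp hu2
    exact hxy (hunique u hu v hv huv ⟨hx, hux, (hadj x).not.mp hux⟩ ⟨hy, huy, (hadj y).not.mp huy⟩)
  · obtain ⟨w, huw⟩ := hni u
    exact hbip.notMem (hbip.symm.mem_of_adj hv ((hadj w).mp huw)) (hbip.mem_of_adj hu huw)

theorem falseTwinFree_of_subsingleton_commonNonNeighbors [Finite V]
    (hbip : IsBipartitionOf G A B) (hni : NoIsolatedVerts G)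
    (hunique : ∀ a₁ ∈ A, ∀ a₂ ∈ A, a₁ ≠ a₂ → (G.commonNonNeighbors B a₁ a₂).Subsingleton)
    (hA : ∀ a ∈ A, 1 < {x ∈ B | ¬G.Adj a x}.ncard) (hB : ∀ b ∈ B, 1 < {x ∈ A | ¬G.Adj b x}.ncard) :
    FalseTwinFree G := by
  intro u v huv
  rcases hbip.mem_or_mem u with hu | hu
  · exact neighborSet_ne_of_one_lt_ncard hbip hni hunique hu (hA u hu) huv
  · exact neighborSet_ne_of_one_lt_ncard hbip.symm hni
      (subsingleton_commonNonNeighbors_symm hunique) hu (hB u hu) huv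

end CommonNonNeighbors

section Forward

variable {V : Type*} {G : SimpleGraph V} {A B : Set V}

theorem FalseTwinFree.exists_adj_not_adj [Finite V] (hftf : FalseTwinFree G) {d : ℕ}
    (hreg : ∀ v, (G.neighborSet v).ncard = d) {u v : V} (huv : u ≠ v) :
    ∃ w, G.Adj v w ∧ ¬G.Adj u w := by
  by_contra! h
  exact hftf v u huv.symm (Set.eq_of_subset_of_ncard_le h ((hreg u).trans (hreg v).symm).le)

theorem exists_isLegalCover_three_le_length [Fintype V] (hbip : IsBipartitionOf G A B)
    (hni : NoIsolatedVerts G) (hftf : FalseTwinFree G) {d : ℕ}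
    (hreg : ∀ v, (G.neighborSet v).ncard = d) {b : V} (hb : b ∈ B)
    (hb2 : 1 < {x ∈ A | ¬G.Adj b x}.ncard) : ∃ l, IsLegalCover G A B l ∧ 3 ≤ l.length := by
  obtain ⟨x₁, ⟨hx₁, hbx₁⟩, x₂, ⟨hx₂, hbx₂⟩, h₁₂⟩ := (Set.one_lt_ncard (Set.toFinite _)).mp hb2
  obtain ⟨x₃, hbx₃⟩ := hni b
  obtain ⟨w, hx₂w, hx₁w⟩ := hftf.exists_adj_not_adj hreg h₁₂
  have hl : IsLegalSeq G [x₁, x₂, x₃] := ((isLegalSeq_singleton x₁).concat hx₂w (by simpa)).concat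
    hbx₃.symm (by simp [G.adj_comm _ b, hbx₁, hbx₂])
  exact hl.exists_isLegalCover hbip hni (by simp [hx₁, hx₂, hbip.symm.mem_of_adj hb hbx₃])

theorem exists_isLegalCover_length_eq_three [Fintype V] (hbip : IsBipartitionOf G A B)
    (hni : NoIsolatedVerts G) (hftf : FalseTwinFree G) {d : ℕ}
    (hreg : ∀ v, (G.neighborSet v).ncard = d) (hgr : grundyTotalDomNum G ≤ 6) {a b : V}
    (ha : a ∈ A) (hb : b ∈ B) (ha2 : 1 < {x ∈ B | ¬G.Adj a x}.ncard)
    (hb2 : 1 < {x ∈ A | ¬G.Adj b x}.ncard) : ∃ l, IsLegalCover G B A l ∧ l.length = 3 := by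
  obtain ⟨lA, hA, hlA⟩ := exists_isLegalCover_three_le_length hbip hni hftf hreg hb hb2
  obtain ⟨lB, hB, hlB⟩ := exists_isLegalCover_three_le_length hbip.symm hni hftf hreg ha ha2
  have := (length_le_grundyTotalDomNum (hA.isTotalDomSeq_append hbip hni hB)).trans hgr
  rw [List.length_append] at this
  exact ⟨lB, hB, by omega⟩

theorem nonempty_commonNonNeighbors_of_ncard_add_two_lt (hbip : IsBipartitionOf G A B)
    {T : Set V} (hT : ∀ a ∈ A, ∃ t ∈ T, G.Adj a t) (hlt : T.ncard + 2 < totalDomNum G)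
    (u v : V) : (G.commonNonNeighbors B u v).Nonempty := by
  by_contra h
  have hS : IsTotalDomSet G (insert u (insert v T)) := by
    intro w
    rcases hbip.mem_or_mem w with hw | hw
    · obtain ⟨t, ht, hwt⟩ := hT w hw
      exact ⟨t, by simp [ht], hwt⟩
    · by_cases huw : G.Adj u w
      · exact ⟨u, by simp, huw.symm⟩
      · by_cases hvw : G.Adj v w
        · exact ⟨v, by simp, hvw.symm⟩
        · exact absurd ⟨w, hw, huw, hvw⟩ h
  have := totalDomNum_le_ncard hS
  have := Set.ncard_insert_le u (insert v T)
  have := Set.ncard_insert_le v T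
  omega

theorem subsingleton_commonNonNeighbors_of_grundyTotalDomNum_lt [Fintype V]
    (hbip : IsBipartitionOf G A B) (hni : NoIsolatedVerts G) (hftf : FalseTwinFree G) {d : ℕ}
    (hreg : ∀ v, (G.neighborSet v).ncard = d) {lB : List V} (hlB : IsLegalCover G B A lB)
    (hgr : grundyTotalDomNum G < lB.length + 4) {u v : V} (hu : u ∈ A) (hv : v ∈ A)
    (huv : u ≠ v) : (G.commonNonNeighbors B u v).Subsingleton := by
  rintro b₁ ⟨hb₁, hub₁, hvb₁⟩ b₂ ⟨hb₂, hub₂, hvb₂⟩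
  by_contra hb
  obtain ⟨w, hvw, huw⟩ := hftf.exists_adj_not_adj hreg huv
  obtain ⟨p₃, hb₂p₃, hb₁p₃⟩ := hftf.exists_adj_not_adj hreg hb
  obtain ⟨p₄, hb₁p₄⟩ := hni b₁
  -- footprints: a private neighbour of `v`, then `b₂`, then `b₁`
  have hl : IsLegalSeq G [u, v, p₃, p₄] :=
    (((isLegalSeq_singleton u).concat hvw (by simpa)).concat hb₂p₃.symm
      (by simp [hub₂, hvb₂])).concat hb₁p₄.symm (by simp [hub₁, hvb₁, G.adj_comm p₃, hb₁p₃])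
  obtain ⟨lA, hlA, hlen⟩ := hl.exists_isLegalCover hbip hni
    (by simp [hu, hv, hbip.symm.mem_of_adj hb₂ hb₂p₃, hbip.symm.mem_of_adj hb₁ hb₁p₄])
  have := length_le_grundyTotalDomNum (hlA.isTotalDomSeq_append hbip hni hlB)
  simp only [List.length_append, List.length_cons, List.length_nil] at hlen this
  omega

theorem isProjectiveNonAdj_of_totalDomNum_eq_six [Fintype V] (hbip : IsBipartitionOf G A B)
    (hftf : FalseTwinFree G) {d : ℕ} (hreg : ∀ v, (G.neighborSet v).ncard = d)
    (htd : totalDomNum G = 6) (hgr : grundyTotalDomNum G = 6) {a b : V} (ha : a ∈ A)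
    (hb : b ∈ B) (ha2 : 1 < {x ∈ B | ¬G.Adj a x}.ncard) (hb2 : 1 < {x ∈ A | ¬G.Adj b x}.ncard) :
    IsProjectiveNonAdj G A B := by
  have hni := noIsolatedVerts_of_totalDomNum_ne_zero (G := G) (by omega)
  obtain ⟨lB, hlB, hlB3⟩ :=
    exists_isLegalCover_length_eq_three hbip hni hftf hreg hgr.le ha hb ha2 hb2
  obtain ⟨lA, hlA, hlA3⟩ :=
    exists_isLegalCover_length_eq_three hbip.symm hni hftf hreg hgr.le hb ha hb2 ha2
  have hlt (l : List V) (hl : l.length = 3) : {x | x ∈ l}.ncard + 2 < totalDomNum G := by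
    have := ncard_setOf_mem_le_length l
    omega
  exact ⟨fun u _ v _ => nonempty_commonNonNeighbors_of_ncard_add_two_lt hbip hlB.dominates
      (hlt lB hlB3) u v,
    fun u _ v _ => nonempty_commonNonNeighbors_of_ncard_add_two_lt hbip.symm hlA.dominates
      (hlt lA hlA3) u v,
    fun u hu v hv huv => subsingleton_commonNonNeighbors_of_grundyTotalDomNum_lt hbip hni hftf
      hreg hlB (by omega) hu hv huv⟩

end Forward

theorem Set.exists_mem_ne_ne_of_two_lt_ncard {α : Type*} {s : Set α} (h : 2 < s.ncard)
    (a b : α) : ∃ x ∈ s, x ≠ a ∧ x ≠ b := by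
  obtain ⟨x, hx, hxab⟩ := Set.exists_mem_notMem_of_ncard_lt_ncard (s := {a, b}) (t := s)
    ((Set.ncard_insert_le a {b}).trans_lt (by simpa using h))
  simp only [Set.mem_insert_iff, Set.mem_singleton_iff, not_or] at hxab
  exact ⟨x, hx, hxab⟩

namespace Configuration

variable {P L : Type*} [Membership P L]

theorem ncard_setOf_mem_eq_lineCount (p : P) : {l : L | p ∈ l}.ncard = lineCount L p :=
  (Nat.card_coe_set_eq _).symm

theorem ncard_setOf_mem_eq_pointCount (l : L) : {p : P | p ∈ l}.ncard = pointCount P l :=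
  (Nat.card_coe_set_eq _).symm

theorem exists_mem_ne_ne_of_two_lt_lineCount {p : P} (h : 2 < lineCount L p) (l₁ l₂ : L) :
    ∃ l, p ∈ l ∧ l ≠ l₁ ∧ l ≠ l₂ :=
  Set.exists_mem_ne_ne_of_two_lt_ncard (s := {l | p ∈ l})
    (by rwa [ncard_setOf_mem_eq_lineCount]) l₁ l₂

theorem HasPoints.exists_config [HasPoints P L] [Nonempty L] (h : ∀ p : P, 2 < lineCount L p) :
    ∃ (p₁ p₂ p₃ : P) (l₁ l₂ l₃ : L),
      p₁ ∉ l₂ ∧ p₁ ∉ l₃ ∧ p₂ ∉ l₁ ∧ p₂ ∈ l₂ ∧ p₂ ∈ l₃ ∧ p₃ ∉ l₁ ∧ p₃ ∈ l₂ ∧ p₃ ∉ l₃ := by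
  obtain ⟨l₂⟩ := ‹Nonempty L›
  obtain ⟨p₁, hp₁⟩ := Nondegenerate.exists_point (P := P) l₂
  -- three lines `a`, `b`, `c` through `p₁ ∉ l₂`; `p₂`, `p₃` are where `a`, `b` meet `l₂`
  obtain ⟨a, hp₁a, hal, -⟩ := exists_mem_ne_ne_of_two_lt_lineCount (h p₁) l₂ l₂
  obtain ⟨b, hp₁b, hbl, hba⟩ := exists_mem_ne_ne_of_two_lt_lineCount (h p₁) l₂ a
  obtain ⟨c, hp₁c, hca, hcb⟩ := exists_mem_ne_ne_of_two_lt_lineCount (h p₁) a b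
  obtain ⟨hp₂a, hp₂⟩ := HasPoints.mkPoint_ax (P := P) hal
  obtain ⟨hp₃b, hp₃⟩ := HasPoints.mkPoint_ax (P := P) hbl
  set p₂ := HasPoints.mkPoint (P := P) hal
  set p₃ := HasPoints.mkPoint (P := P) hbl
  have hp₁₂ : p₁ ≠ p₂ := fun h => hp₁ (h ▸ hp₂)
  have hp₁₃ : p₁ ≠ p₃ := fun h => hp₁ (h ▸ hp₃)
  have hp₂₃ : p₂ ≠ p₃ := fun h =>
    (Nondegenerate.eq_or_eq hp₁a hp₂a hp₁b (h ▸ hp₃b)).elim hp₁₂ hba.symm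
  obtain ⟨l₃, hp₂l₃, hl₃l, hl₃a⟩ := exists_mem_ne_ne_of_two_lt_lineCount (h p₂) l₂ a
  refine ⟨p₁, p₂, p₃, c, l₂, l₃, hp₁, fun h => ?_, fun h => ?_, hp₂, hp₂l₃, fun h => ?_, hp₃,
    fun h => ?_⟩
  · exact (Nondegenerate.eq_or_eq hp₁a hp₂a h hp₂l₃).elim hp₁₂ hl₃a.symm
  · exact (Nondegenerate.eq_or_eq hp₁a hp₂a hp₁c h).elim hp₁₂ hca.symm
  · exact (Nondegenerate.eq_or_eq hp₁b hp₃b hp₁c h).elim hp₁₃ hcb.symm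
  · exact (Nondegenerate.eq_or_eq hp₂ hp₃ hp₂l₃ h).elim hp₂₃ hl₃l.symm

theorem ProjectivePlane.exists_common_line [ProjectivePlane P L] [Finite P] [Finite L] (p₁ p₂ : P) :
    ∃ l : L, p₁ ∈ l ∧ p₂ ∈ l := by
  rcases eq_or_ne p₁ p₂ with rfl | h
  · obtain ⟨⟨l, hl⟩⟩ := (Nat.card_pos_iff.mp (two_pos.trans (two_lt_lineCount L p₁))).1
    exact ⟨l, hl, hl⟩
  · exact ⟨_, HasLines.mkLine_ax h⟩

theorem ProjectivePlane.exists_common_point [ProjectivePlane P L] [Finite P] [Finite L]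
    (l₁ l₂ : L) : ∃ p : P, p ∈ l₁ ∧ p ∈ l₂ := by
  rcases eq_or_ne l₁ l₂ with rfl | h
  · obtain ⟨⟨p, hp⟩⟩ := (Nat.card_pos_iff.mp (two_pos.trans (two_lt_pointCount P l₁))).1
    exact ⟨p, hp, hp⟩
  · exact ⟨_, HasPoints.mkPoint_ax h⟩

theorem ProjectivePlane.exists_not_collinear [ProjectivePlane P L] :
    ∃ p₁ p₂ p₃ : P, ∀ l : L, p₁ ∉ l ∨ p₂ ∉ l ∨ p₃ ∉ l := by
  obtain ⟨p₁, p₂, p₃, -, l₂, l₃, hp₁l₂, -, -, hp₂l₂, hp₂l₃, -, hp₃l₂, hp₃l₃⟩ :=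
    exists_config (P := P) (L := L)
  refine ⟨p₁, p₂, p₃, fun l => ?_⟩
  by_contra! h
  rcases Nondegenerate.eq_or_eq hp₂l₂ hp₃l₂ h.2.1 h.2.2 with h₂₃ | rfl
  · exact hp₃l₃ (h₂₃ ▸ hp₂l₃)
  · exact hp₁l₂ h.1

end Configuration

section NonAdjacencyPlane

variable {V : Type*} {G : SimpleGraph V} {A B : Set V}

abbrev nonAdjMembership (G : SimpleGraph V) (A B : Set V) : Membership A B :=
  ⟨fun b a => ¬G.Adj a b⟩

theorem lineCount_nonAdjMembership (a : A) :
    @Configuration.lineCount A B (nonAdjMembership G A B) a = {x ∈ B | ¬G.Adj a x}.ncard := by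
  rw [Configuration.lineCount, ← Nat.card_coe_set_eq]
  exact Nat.card_congr (Equiv.subtypeSubtypeEquivSubtypeInter (· ∈ B) (¬G.Adj a ·))

noncomputable abbrev IsProjectiveNonAdj.projectivePlane (h : IsProjectiveNonAdj G A B)
    (hbip : IsBipartitionOf G A B) (hni : NoIsolatedVerts G) (hB : B.Nonempty)
    (h3 : ∀ a ∈ A, 2 < {x ∈ B | ¬G.Adj a x}.ncard) :
    @Configuration.ProjectivePlane A B (nonAdjMembership G A B) :=
  letI := nonAdjMembership G A B
  letI hp : Configuration.HasPoints A B :=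
    { exists_point := fun b =>
        have ⟨a, hba⟩ := hni b
        ⟨⟨a, hbip.symm.mem_of_adj b.2 hba⟩, not_not.mpr hba.symm⟩
      exists_line := fun a =>
        have ⟨b, hab⟩ := hni a
        ⟨⟨b, hbip.mem_of_adj a.2 hab⟩, not_not.mpr hab⟩
      eq_or_eq := fun {a₁ a₂ b₁ b₂} h₁ h₂ h₃ h₄ => or_iff_not_imp_left.mpr fun ha =>
        Subtype.ext (h.unique a₁ a₁.2 a₂ a₂.2 (fun h => ha (Subtype.ext h)) ⟨b₁.2, h₁, h₂⟩
          ⟨b₂.2, h₃, h₄⟩)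
      mkPoint := fun {b₁ b₂} _ => ⟨_, (h.meet b₁ b₁.2 b₂ b₂.2).some_mem.1⟩
      mkPoint_ax := fun {b₁ b₂} _ =>
        have hx := (h.meet b₁ b₁.2 b₂ b₂.2).some_mem
        ⟨fun h => hx.2.1 h.symm, fun h => hx.2.2 h.symm⟩ }
  haveI : Nonempty B := hB.to_subtype
  { hp with
    mkLine := fun {a₁ a₂} _ => ⟨_, (h.join a₁ a₁.2 a₂ a₂.2).some_mem.1⟩
    mkLine_ax := fun {a₁ a₂} _ => (h.join a₁ a₁.2 a₂ a₂.2).some_mem.2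
    exists_config := Configuration.HasPoints.exists_config fun a => by
      rw [lineCount_nonAdjMembership]
      exact h3 a a.2 }

end NonAdjacencyPlane

theorem sub_one_sq_add_sub_one_add_one {k : ℕ} (hk : 1 ≤ k) :
    (k - 1) ^ 2 + (k - 1) + 1 = k ^ 2 - k + 1 := by
  obtain ⟨q, rfl⟩ : ∃ q, k = q + 1 := ⟨k - 1, by omega⟩
  have : (q + 1) ^ 2 = q ^ 2 + q + (q + 1) := by ring
  rw [Nat.add_sub_cancel, this]
  omega

theorem exists_projectivePlane_of_totalDomNum_eq_six {V : Type} [Fintype V]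
    {G : SimpleGraph V} {A B : Set V} {n k : ℕ} (hk : 3 ≤ k) (hcard : Fintype.card V = 2 * n)
    (hbip : IsBipartitionOf G A B) (hftf : FalseTwinFree G)
    (hreg : ∀ v, (G.neighborSet v).ncard = n - k) (htd : totalDomNum G = 6)
    (hgr : grundyTotalDomNum G = 6) :
    n = k ^ 2 - k + 1 ∧
      ∃ (P L : Type) (m : Membership P L) (_ : Fintype P) (_ : Fintype L)
        (pp : @Configuration.ProjectivePlane P L m),
        @Configuration.ProjectivePlane.order P L m pp = k - 1 := by
  have hni := noIsolatedVerts_of_totalDomNum_ne_zero (G := G) (by omega)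
  obtain ⟨v⟩ := nonempty_of_totalDomNum_ne_zero (G := G) (by omega)
  have hd : n - k ≠ 0 := hreg v ▸ ((Set.ncard_pos (Set.toFinite _)).mpr (hni v)).ne'
  rw [← Nat.card_eq_fintype_card] at hcard
  have hA := hbip.ncard_eq_of_regular hcard hreg hd
  have hB := hbip.symm.ncard_eq_of_regular hcard hreg hd
  have hcA : ∀ a ∈ A, {x ∈ B | ¬G.Adj a x}.ncard = k := fun a ha => by
    rw [hbip.ncard_nonAdj ha, hB, hreg]; omega
  have hcB : ∀ b ∈ B, {x ∈ A | ¬G.Adj b x}.ncard = k := fun b hb => by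
    rw [hbip.symm.ncard_nonAdj hb, hA, hreg]; omega
  obtain ⟨a, ha⟩ := Set.nonempty_of_ncard_ne_zero (s := A) (by omega)
  obtain ⟨b, hb⟩ := Set.nonempty_of_ncard_ne_zero (s := B) (by omega)
  have hproj := isProjectiveNonAdj_of_totalDomNum_eq_six hbip hftf hreg htd hgr ha hb
    (by rw [hcA a ha]; omega) (by rw [hcB b hb]; omega)
  let := nonAdjMembership G A B
  let := hproj.projectivePlane hbip hni ⟨b, hb⟩ fun a ha => by rw [hcA a ha]; omega
  have hord : Configuration.ProjectivePlane.order A B = k - 1 := by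
    have := Configuration.ProjectivePlane.lineCount_eq (P := A) B ⟨a, ha⟩
    rw [lineCount_nonAdjMembership, hcA a ha] at this
    omega
  let := Fintype.ofFinite A
  let := Fintype.ofFinite B
  refine ⟨?_, A, B, _, inferInstance, inferInstance, _, hord⟩
  have := Configuration.ProjectivePlane.card_points A B
  rw [← Nat.card_eq_fintype_card, Nat.card_coe_set_eq, hA, hord] at this
  rw [this, sub_one_sq_add_sub_one_add_one (by omega)]

section NonIncidenceGraph

open Configuration

variable (P L : Type*) [Membership P L]

def nonIncidenceGraph : SimpleGraph (P ⊕ L) where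
  Adj
    | .inl p, .inr l | .inr l, .inl p => p ∉ l
    | _, _ => False
  symm := ⟨by rintro (p | l) (q | m) h <;> exact h⟩
  loopless := ⟨by rintro (p | l) h <;> exact h⟩

variable {P L}

@[simp]
theorem nonIncidenceGraph_adj_inl_inr {p : P} {l : L} :
    (nonIncidenceGraph P L).Adj (.inl p) (.inr l) ↔ p ∉ l :=
  Iff.rfl

@[simp]
theorem nonIncidenceGraph_adj_inr_inl {p : P} {l : L} :
    (nonIncidenceGraph P L).Adj (.inr l) (.inl p) ↔ p ∉ l :=
  Iff.rfl

@[simp]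
theorem not_nonIncidenceGraph_adj_inl_inl {p q : P} :
    ¬(nonIncidenceGraph P L).Adj (.inl p) (.inl q) :=
  id

@[simp]
theorem not_nonIncidenceGraph_adj_inr_inr {l m : L} :
    ¬(nonIncidenceGraph P L).Adj (.inr l) (.inr m) :=
  id

theorem isBipartitionOf_nonIncidenceGraph :
    IsBipartitionOf (nonIncidenceGraph P L) (Set.range .inl) (Set.range .inr) := by
  constructor
  · rintro (p | l) <;> simp
  · rintro (p | l) (q | m) h <;> simp_all

theorem noIsolatedVerts_nonIncidenceGraph [Nondegenerate P L] :
    NoIsolatedVerts (nonIncidenceGraph P L)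
  | .inl p => have ⟨l, hl⟩ := Nondegenerate.exists_line p; ⟨.inr l, hl⟩
  | .inr l => have ⟨p, hp⟩ := Nondegenerate.exists_point l; ⟨.inl p, hp⟩

theorem isProjectiveNonAdj_nonIncidenceGraph [ProjectivePlane P L] [Finite P] [Finite L] :
    IsProjectiveNonAdj (nonIncidenceGraph P L) (Set.range .inl) (Set.range .inr) where
  join := by
    rintro _ ⟨p₁, rfl⟩ _ ⟨p₂, rfl⟩
    obtain ⟨l, h₁, h₂⟩ := ProjectivePlane.exists_common_line (L := L) p₁ p₂
    exact ⟨.inr l, ⟨l, rfl⟩, by simpa, by simpa⟩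
  meet := by
    rintro _ ⟨l₁, rfl⟩ _ ⟨l₂, rfl⟩
    obtain ⟨p, h₁, h₂⟩ := ProjectivePlane.exists_common_point (P := P) l₁ l₂
    exact ⟨.inl p, ⟨p, rfl⟩, by simpa, by simpa⟩
  unique := by
    rintro _ ⟨p₁, rfl⟩ _ ⟨p₂, rfl⟩ hne _ ⟨⟨l, rfl⟩, h₁, h₂⟩ _ ⟨⟨m, rfl⟩, h₃, h₄⟩
    simp only [nonIncidenceGraph_adj_inl_inr, not_not] at h₁ h₂ h₃ h₄
    exact congrArg _ ((Nondegenerate.eq_or_eq h₁ h₂ h₃ h₄).resolve_left (hne <| congrArg _ ·))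

theorem ncard_neighborSet_nonIncidenceGraph [ProjectivePlane P L] [Finite P] [Finite L]
    (v : P ⊕ L) :
    ((nonIncidenceGraph P L).neighborSet v).ncard = ProjectivePlane.order P L ^ 2 := by
  have := Fintype.ofFinite P
  have := Fintype.ofFinite L
  rcases v with p | l
  · have hN : (nonIncidenceGraph P L).neighborSet (.inl p) = .inr '' {l | p ∈ l}ᶜ := by
      ext (q | l) <;> simp
    have := Set.ncard_add_ncard_compl {l : L | p ∈ l}
    rw [ncard_setOf_mem_eq_lineCount, ProjectivePlane.lineCount_eq, Nat.card_eq_fintype_card,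
      ProjectivePlane.card_lines P L] at this
    rw [hN, Set.ncard_image_of_injective _ Sum.inr_injective]
    omega
  · have hN : (nonIncidenceGraph P L).neighborSet (.inr l) = .inl '' {p | p ∈ l}ᶜ := by
      ext (q | l) <;> simp
    have := Set.ncard_add_ncard_compl {p : P | p ∈ l}
    rw [ncard_setOf_mem_eq_pointCount, ProjectivePlane.pointCount_eq, Nat.card_eq_fintype_card,
      ProjectivePlane.card_points P L] at this
    rw [hN, Set.ncard_image_of_injective _ Sum.inl_injective]
    omega

end NonIncidenceGraph

section ProjectivePlane

open Configuration

variable {P L : Type*} [Membership P L] [ProjectivePlane P L] [Finite P] [Finite L]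

theorem falseTwinFree_nonIncidenceGraph : FalseTwinFree (nonIncidenceGraph P L) := by
  have := Fintype.ofFinite P
  have := Fintype.ofFinite L
  have hbip := isBipartitionOf_nonIncidenceGraph (P := P) (L := L)
  have := ProjectivePlane.one_lt_order P L
  refine falseTwinFree_of_subsingleton_commonNonNeighbors hbip noIsolatedVerts_nonIncidenceGraph
    isProjectiveNonAdj_nonIncidenceGraph.unique (fun a ha => ?_) (fun b hb => ?_)
  · rw [hbip.ncard_nonAdj ha, Set.ncard_range_of_injective Sum.inr_injective,
      ncard_neighborSet_nonIncidenceGraph, Nat.card_eq_fintype_card, ProjectivePlane.card_lines P L]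
    omega
  · rw [hbip.symm.ncard_nonAdj hb, Set.ncard_range_of_injective Sum.inl_injective,
      ncard_neighborSet_nonIncidenceGraph, Nat.card_eq_fintype_card,
      ProjectivePlane.card_points P L]
    omega

theorem exists_isTotalDomSeq_nonIncidenceGraph :
    ∃ l, IsTotalDomSeq (nonIncidenceGraph P L) l ∧ l.length = 6 := by
  obtain ⟨p₁, p₂, p₃, h⟩ := ProjectivePlane.exists_not_collinear (P := P) (L := L)
  have hproj := isProjectiveNonAdj_nonIncidenceGraph (P := P) (L := L)
  obtain ⟨lA, lB, hA, hB, hlA, hlB⟩ := exists_isLegalCover_of_not_collinear hproj.join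
    hproj.unique ⟨p₁, rfl⟩ ⟨p₂, rfl⟩ ⟨p₃, rfl⟩ (by rintro _ ⟨l, rfl⟩; simpa using h l)
  exact ⟨lA ++ lB, hA.isTotalDomSeq_append isBipartitionOf_nonIncidenceGraph
    noIsolatedVerts_nonIncidenceGraph hB, by simp [hlA, hlB]⟩

theorem totalDomNum_nonIncidenceGraph : totalDomNum (nonIncidenceGraph P L) = 6 := by
  obtain ⟨l, hl, hl6⟩ := exists_isTotalDomSeq_nonIncidenceGraph (P := P) (L := L)
  obtain ⟨p, -, -, m, -⟩ := ProjectivePlane.exists_config (P := P) (L := L)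
  have hproj := isProjectiveNonAdj_nonIncidenceGraph (P := P) (L := L)
  exact totalDomNum_eq_six isBipartitionOf_nonIncidenceGraph hproj.join hproj.meet
    ⟨_, p, rfl⟩ ⟨_, m, rfl⟩ hl.2 (hl6 ▸ ncard_setOf_mem_le_length l)

theorem grundyTotalDomNum_nonIncidenceGraph : grundyTotalDomNum (nonIncidenceGraph P L) = 6 := by
  obtain ⟨l, hl, hl6⟩ := exists_isTotalDomSeq_nonIncidenceGraph (P := P) (L := L)
  exact grundyTotalDomNum_eq_six isBipartitionOf_nonIncidenceGraph
    isProjectiveNonAdj_nonIncidenceGraph.unique hl hl6.ge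

end ProjectivePlane

/-- For `k ≥ 3`, an `(n−k)`-regular bipartite false twin-free graph
on `2n` vertices with `γ_t = γ_gr^t = 6` exists iff `n = k² − k + 1` and there
exists a (finite) projective plane of order `k − 1`. -/
theorem regular_bipartite_six_iff_projective_plane (n k : ℕ) (hk : 3 ≤ k) :
    (∃ (V : Type) (_ : Fintype V) (G : SimpleGraph V) (A B : Set V),
        Fintype.card V = 2 * n ∧ IsBipartitionOf G A B ∧ FalseTwinFree G ∧
        (∀ v : V, (G.neighborSet v).ncard = n - k) ∧
        totalDomNum G = 6 ∧ grundyTotalDomNum G = 6) ↔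
      (n = k ^ 2 - k + 1 ∧
        ∃ (P L : Type) (m : Membership P L) (_ : Fintype P) (_ : Fintype L)
          (pp : @Configuration.ProjectivePlane P L m),
          @Configuration.ProjectivePlane.order P L m pp = k - 1) := by
  constructor
  · rintro ⟨V, _, G, A, B, hcard, hbip, hftf, hreg, htd, hgr⟩
    exact exists_projectivePlane_of_totalDomNum_eq_six hk hcard hbip hftf hreg htd hgr
  · rintro ⟨hn, P, L, _, _, _, _, hord⟩
    rw [← sub_one_sq_add_sub_one_add_one (by omega)] at hn
    refine ⟨P ⊕ L, inferInstance, nonIncidenceGraph P L, _, _, ?_,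
      isBipartitionOf_nonIncidenceGraph, falseTwinFree_nonIncidenceGraph, fun v => ?_,
      totalDomNum_nonIncidenceGraph, grundyTotalDomNum_nonIncidenceGraph⟩
    · rw [Fintype.card_sum, Configuration.ProjectivePlane.card_points P L,
        Configuration.ProjectivePlane.card_lines P L, hord]
      omega
    · rw [ncard_neighborSet_nonIncidenceGraph, hord]
      omega
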